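/- Let 1 ≤ n ≤ 7, N ≥ 2, let Ω ⊂ ℝ^n be an open, bounded, connected set with C¹ boundary and finite perimeter, and let 𝓔 be a Cheeger N-cluster of Ω whose chambers 𝓔(k), k = 1,…,N, are taken in their closed representatives. Then Σ(𝓔;Ω) = Σ(𝓔(0);Ω) = { x ∈ ∂𝓔(0) ∩ Ω : θ_n(x,𝓔(0)) = 0 } = Ω ∩ ∪_{1≤i<j≤N} (∂𝓔(i) ∩ ∂𝓔(j) ∩ ∂𝓔(0)). Moreover, Σ(𝓔(0);Ω) is a closed set. -/

import Mathlib

open MeasureTheory Set Metric Filter Bornology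
open scoped ENNReal NNReal Topology RealInnerProductSpace

noncomputable section

abbrev Euc (n : ℕ) := EuclideanSpace ℝ (Fin n)

/-- Divergence of a vector field on `ℝⁿ`. -/
def vdiv {n : ℕ} (T : Euc n → Euc n) (x : Euc n) : ℝ :=
  ∑ i : Fin n, ⟪fderiv ℝ T x (EuclideanSpace.single i 1), EuclideanSpace.single i 1⟫

/-- The relative (distributional) perimeter of `E` inside `A`: the supremum of
`∫_E div T` over smooth, compactly supported vector fields `T` with `tsupport T ⊆ A`
and `‖T‖ ≤ 1`. -/
def perimeterIn {n : ℕ} (E A : Set (Euc n)) : ℝ≥0∞ :=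
  ⨆ (T : Euc n → Euc n) (_ : ContDiff ℝ (⊤ : ℕ∞) T) (_ : HasCompactSupport T)
    (_ : tsupport T ⊆ A) (_ : ∀ x, ‖T x‖ ≤ 1),
    ENNReal.ofReal (∫ x in E, vdiv T x)

/-- The (distributional) perimeter of `E`. -/
def perimeter {n : ℕ} (E : Set (Euc n)) : ℝ≥0∞ := perimeterIn E univ

/-- `E` has locally finite perimeter. -/
def HasLocFinitePerimeter {n : ℕ} (E : Set (Euc n)) : Prop :=
  ∀ (x : Euc n) (r : ℝ), perimeterIn E (ball x r) < ⊤

/-- `ν` is the measure-theoretic outer unit normal of `E` at `x`: blow-ups of `E`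
at `x` converge in measure to the half space `{y : ⟪y - x, ν⟫ ≤ 0}`. -/
def blowsUpTo {n : ℕ} (E : Set (Euc n)) (x ν : Euc n) : Prop :=
  ‖ν‖ = 1 ∧
    Tendsto (fun r : ℝ =>
        volume (symmDiff E {y : Euc n | ⟪y - x, ν⟫ ≤ 0} ∩ ball x r) / ENNReal.ofReal (r ^ n))
      (𝓝[>] (0 : ℝ)) (𝓝 0)

/-- The reduced boundary `∂* E`. -/
def redBoundary {n : ℕ} (E : Set (Euc n)) : Set (Euc n) :=
  {x | ∃ ν, blowsUpTo E x ν}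

open Classical in
/-- The measure-theoretic outer unit normal `ν_E` (junk value `0` off `∂* E`). -/
def mtNormal {n : ℕ} (E : Set (Euc n)) (x : Euc n) : Euc n :=
  if h : ∃ ν, blowsUpTo E x ν then h.choose else 0

/-- An `N`-cluster contained in `Ω`: `N` Borel subsets of `Ω`, with positive and finite
volume, finite perimeter, pairwise disjoint up to Lebesgue measure zero. -/
structure NCluster (n N : ℕ) (Ω : Set (Euc n)) where
  cham : Fin N → Set (Euc n)
  measurableSet_cham : ∀ i, MeasurableSet (cham i)
  cham_subset : ∀ i, cham i ⊆ Ω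
  vol_pos : ∀ i, 0 < volume (cham i)
  vol_lt_top : ∀ i, volume (cham i) < ⊤
  perimeter_lt_top : ∀ i, perimeter (cham i) < ⊤
  ae_disjoint : ∀ i j, i ≠ j → volume (cham i ∩ cham j) = 0

/-- The functional `Σᵢ P(𝓔(i))/|𝓔(i)|`. -/
def clusterEnergy {n N : ℕ} {Ω : Set (Euc n)} (𝓔 : NCluster n N Ω) : ℝ≥0∞ :=
  ∑ i, perimeter (𝓔.cham i) / volume (𝓔.cham i)

/-- The `N`-Cheeger constant `H_N(Ω)`. -/
def NCheeger (n N : ℕ) (Ω : Set (Euc n)) : ℝ≥0∞ :=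
  ⨅ 𝓔 : NCluster n N Ω, clusterEnergy 𝓔

/-- A Cheeger `N`-cluster: a minimizer of `clusterEnergy`. -/
def IsCheegerNCluster {n N : ℕ} {Ω : Set (Euc n)} (𝓔 : NCluster n N Ω) : Prop :=
  clusterEnergy 𝓔 = NCheeger n N Ω

/-- The Cheeger constant `h(A)`. -/
def cheegerConst {n : ℕ} (A : Set (Euc n)) : ℝ≥0∞ :=
  ⨅ (E : Set (Euc n)) (_ : MeasurableSet E) (_ : E ⊆ A) (_ : 0 < volume E),
    perimeter E / volume E

/-- A Cheeger set of `A`. -/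
def IsCheegerSet {n : ℕ} (E A : Set (Euc n)) : Prop :=
  MeasurableSet E ∧ E ⊆ A ∧ 0 < volume E ∧ perimeter E / volume E = cheegerConst A

/-- `Ω` has `C¹` boundary: near each boundary point, `Ω` is the sublevel set of a `C¹`
function with non-vanishing differential. -/
def HasC1Boundary {n : ℕ} (Ω : Set (Euc n)) : Prop :=
  ∀ x ∈ frontier Ω, ∃ (U : Set (Euc n)) (f : Euc n → ℝ), IsOpen U ∧ x ∈ U ∧
    ContDiff ℝ 1 f ∧ (∀ y ∈ U, fderiv ℝ f y ≠ 0) ∧ Ω ∩ U = {y ∈ U | f y < 0}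

/-- The `n`-dimensional density of `E` at `x` exists and equals `d`. -/
def HasDensity {n : ℕ} (E : Set (Euc n)) (x : Euc n) (d : ℝ≥0∞) : Prop :=
  Tendsto (fun r : ℝ => volume (E ∩ ball x r) / volume (ball x r)) (𝓝[>] (0 : ℝ)) (𝓝 d)

/-- The external chamber `𝓔(0) = Ω \ ⋃ᵢ 𝓔(i)`. -/
def extChamber {n N : ℕ} {Ω : Set (Euc n)} (𝓔 : NCluster n N Ω) : Set (Euc n) :=
  Ω \ ⋃ i, 𝓔.cham i


set_option maxHeartbeats 1000000


lemma aux_volume_hyperplane {n : ℕ} (x ν : Euc n) (hν : ν ≠ 0) :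
    volume {y : Euc n | ⟪y - x, ν⟫ = 0} = 0 := by
  have hker : LinearMap.ker ((innerSL ℝ ν : Euc n →L[ℝ] ℝ) : Euc n →ₗ[ℝ] ℝ) ≠ (⊤ : Submodule ℝ (Euc n)) := by
    intro h
    have : ν ∈ LinearMap.ker ((innerSL ℝ ν : Euc n →L[ℝ] ℝ) : Euc n →ₗ[ℝ] ℝ) := h ▸ Submodule.mem_top
    have h2 : ⟪ν, ν⟫ = 0 := this
    exact hν (inner_self_eq_zero.mp h2)
  have hset : {y : Euc n | ⟪y - x, ν⟫ = 0}
      = (AffineSubspace.mk' x (LinearMap.ker ((innerSL ℝ ν : Euc n →L[ℝ] ℝ) : Euc n →ₗ[ℝ] ℝ)) : Set (Euc n)) := by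
    ext y
    simp only [Set.mem_setOf_eq, SetLike.mem_coe, AffineSubspace.mem_mk',
      LinearMap.mem_ker, ContinuousLinearMap.coe_coe, vsub_eq_sub, innerSL_apply_apply]
    rw [real_inner_comm]
  have htop : AffineSubspace.mk' x (LinearMap.ker ((innerSL ℝ ν : Euc n →L[ℝ] ℝ) : Euc n →ₗ[ℝ] ℝ)) ≠ ⊤ := by
    intro h
    apply hker
    have := AffineSubspace.direction_mk' x (LinearMap.ker ((innerSL ℝ ν : Euc n →L[ℝ] ℝ) : Euc n →ₗ[ℝ] ℝ))
    rw [h] at this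
    simpa using this.symm
  rw [hset]
  exact Measure.addHaar_affineSubspace volume _ htop


lemma aux_cone {n : ℕ} (x : Euc n) {νi νj : Euc n} (hi : ‖νi‖ = 1) (hj : ‖νj‖ = 1)
    (hw : νi + νj ≠ 0) :
    ∃ δ : ℝ, 0 < δ ∧ δ ≤ 1/4 ∧ ∀ r : ℝ, 0 < r → ∃ z : Euc n,
      ball z (δ * r) ⊆ ({y : Euc n | ⟪y - x, νi⟫ ≤ 0} ∩ {y : Euc n | ⟪y - x, νj⟫ ≤ 0})
        ∩ ball x r := by
  set w := νi + νj with hwdef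
  have hwnorm : 0 < ‖w‖ := norm_pos_iff.mpr hw
  set u : Euc n := ‖w‖⁻¹ • w with hudef
  have hunorm : ‖u‖ = 1 := by
    rw [hudef, norm_smul, norm_inv, norm_norm, inv_mul_cancel₀ (ne_of_gt hwnorm)]
  set a : ℝ := ‖w‖ / 2 with hadef
  have ha : 0 < a := by positivity
  have hwi : ⟪w, νi⟫ = ‖w‖ ^ 2 / 2 := by
    have h1 : ⟪w, w⟫ = ‖w‖ ^ 2 := real_inner_self_eq_norm_sq w
    have h2 : ⟪w, w⟫ = ⟪w, νi⟫ + ⟪w, νj⟫ := by rw [hwdef]; rw [inner_add_right]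
    have h3 : ⟪w, νi⟫ = ⟪w, νj⟫ := by
      rw [hwdef, inner_add_left, inner_add_left]
      have : ⟪νi, νj⟫ = ⟪νj, νi⟫ := real_inner_comm _ _
      have hii : ⟪νi, νi⟫ = 1 := by
        rw [real_inner_self_eq_norm_sq, hi]; norm_num
      have hjj : ⟪νj, νj⟫ = 1 := by
        rw [real_inner_self_eq_norm_sq, hj]; norm_num
      rw [hii, hjj, this]; ring
    nlinarith [h1, h2, h3]
  have hwj : ⟪w, νj⟫ = ‖w‖ ^ 2 / 2 := by
    have h3 : ⟪w, νi⟫ = ⟪w, νj⟫ := by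
      rw [hwdef, inner_add_left, inner_add_left]
      have : ⟪νi, νj⟫ = ⟪νj, νi⟫ := real_inner_comm _ _
      have hii : ⟪νi, νi⟫ = 1 := by
        rw [real_inner_self_eq_norm_sq, hi]; norm_num
      have hjj : ⟪νj, νj⟫ = 1 := by
        rw [real_inner_self_eq_norm_sq, hj]; norm_num
      rw [hii, hjj, this]; ring
    rw [← h3, hwi]
  have hui : ⟪u, νi⟫ = a := by
    rw [hudef, real_inner_smul_left, hwi, hadef]
    field_simp
  have huj : ⟪u, νj⟫ = a := by
    rw [hudef, real_inner_smul_left, hwj, hadef]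
    field_simp
  refine ⟨min (a / 2) (1 / 4), by positivity, min_le_right _ _, fun r hr => ?_⟩
  set δ := min (a / 2) (1 / 4) with hδdef
  have hδa : δ ≤ a / 2 := min_le_left _ _
  have hδq : δ ≤ 1 / 4 := min_le_right _ _
  refine ⟨x - (r / 2) • u, fun y hy => ?_⟩
  rw [mem_ball, dist_eq_norm] at hy
  set d : Euc n := y - (x - (r / 2) • u) with hddef
  have hyx : y - x = d - (r / 2) • u := by rw [hddef]; abel
  have hdn : ‖d‖ < δ * r := hy
  have key : ∀ ν : Euc n, ‖ν‖ = 1 → ⟪u, ν⟫ = a → ⟪y - x, ν⟫ ≤ 0 := by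
    intro ν hν huν
    rw [hyx, inner_sub_left, real_inner_smul_left, huν]
    have h1 : ⟪d, ν⟫ ≤ ‖d‖ := by
      calc ⟪d, ν⟫ ≤ ‖d‖ * ‖ν‖ := real_inner_le_norm _ _
        _ = ‖d‖ := by rw [hν, mul_one]
    have h2 : ‖d‖ < δ * r := hdn
    have h3 : δ * r ≤ (a / 2) * r := by nlinarith
    nlinarith
  refine ⟨⟨key νi hi hui, key νj hj huj⟩, ?_⟩
  rw [mem_ball, dist_eq_norm, hyx]
  calc ‖d - (r / 2) • u‖ ≤ ‖d‖ + ‖(r / 2) • u‖ := norm_sub_le _ _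
    _ < δ * r + ‖(r / 2) • u‖ := by linarith
    _ = δ * r + r / 2 := by
        rw [norm_smul, hunorm, mul_one, Real.norm_eq_abs, abs_of_pos (by linarith)]
    _ ≤ (1 / 4) * r + r / 2 := by nlinarith
    _ < r := by linarith


lemma aux_nontrivial {n : ℕ} (hn : 1 ≤ n) : Nontrivial (Euc n) := by
  refine ⟨⟨EuclideanSpace.single ⟨0, hn⟩ (1 : ℝ), 0, ?_⟩⟩
  intro h
  have := congrArg norm h
  rw [EuclideanSpace.norm_single, norm_zero] at this
  norm_num at this

lemma aux_lower_bound {n : ℕ} (hn : 1 ≤ n) {A : ℝ → Set (Euc n)} {δ : ℝ} (hδ : 0 < δ)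
    (h : ∀ r : ℝ, 0 < r → ∃ z : Euc n, ball z (δ * r) ⊆ A r) :
    ∀ᶠ r in 𝓝[>] (0 : ℝ),
      ENNReal.ofReal (δ ^ n) * volume (ball (0 : Euc n) 1) ≤ volume (A r) / ENNReal.ofReal (r ^ n) := by
  haveI := aux_nontrivial hn
  filter_upwards [self_mem_nhdsWithin] with r hr
  have hr : (0 : ℝ) < r := hr
  obtain ⟨z, hz⟩ := h r hr
  have hb : volume (ball z (δ * r)) ≤ volume (A r) := measure_mono hz
  rw [Measure.addHaar_ball volume z (by positivity)] at hb
  rw [finrank_euclideanSpace_fin] at hb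
  rw [ENNReal.le_div_iff_mul_le (Or.inl (by positivity)) (Or.inl ENNReal.ofReal_ne_top)]
  calc ENNReal.ofReal (δ ^ n) * volume (ball (0 : Euc n) 1) * ENNReal.ofReal (r ^ n)
      = ENNReal.ofReal ((δ * r) ^ n) * volume (ball (0 : Euc n) 1) := by
        rw [mul_pow, ENNReal.ofReal_mul (by positivity)]; ring
    _ ≤ volume (A r) := hb

lemma aux_absurd {f : ℝ → ℝ≥0∞} {c : ℝ≥0∞} (hc : 0 < c)
    (hf : Tendsto f (𝓝[>] (0 : ℝ)) (𝓝 0)) (h : ∀ᶠ r in 𝓝[>] (0 : ℝ), c ≤ f r) : False := by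
  have h2 : ∀ᶠ r in 𝓝[>] (0 : ℝ), f r < c := hf (Iio_mem_nhds hc)
  obtain ⟨r, h1, h2⟩ := (h.and h2).exists
  exact absurd h1 (not_le.mpr h2)

lemma aux_tendsto_zero_of_le {α : Type*} {l : Filter α} {f g : α → ℝ≥0∞}
    (hg : Tendsto g l (𝓝 0)) (h : ∀ᶠ x in l, f x ≤ g x) : Tendsto f l (𝓝 0) :=
  tendsto_of_tendsto_of_tendsto_of_le_of_le' tendsto_const_nhds hg
    (Eventually.of_forall fun _ => zero_le') h

lemma aux_div_mul (a b c : ℝ≥0∞) (hb0 : b ≠ 0) (hbt : b ≠ ⊤) : a / (b * c) = a / b / c := by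
  rw [div_eq_mul_inv, ENNReal.mul_inv (Or.inl hb0) (Or.inl hbt), ← mul_assoc,
    div_eq_mul_inv, div_eq_mul_inv]

/-- The density quotient and the `r^n` quotient are equivalent for tendsto-to-zero. -/
lemma aux_density_iff {n : ℕ} (hn : 1 ≤ n) (S : Set (Euc n)) (x : Euc n) :
    Tendsto (fun r : ℝ => volume (S ∩ ball x r) / volume (ball x r)) (𝓝[>] (0 : ℝ)) (𝓝 0) ↔
    Tendsto (fun r : ℝ => volume (S ∩ ball x r) / ENNReal.ofReal (r ^ n)) (𝓝[>] (0 : ℝ)) (𝓝 0) := by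
  haveI := aux_nontrivial hn
  set V1 := volume (ball (0 : Euc n) 1) with hV1
  have hV1pos : V1 ≠ 0 := (measure_ball_pos volume 0 one_pos).ne'
  have hV1top : V1 ≠ ⊤ := measure_ball_lt_top.ne
  have hball : ∀ r : ℝ, 0 < r → volume (ball x r) = ENNReal.ofReal (r ^ n) * V1 := by
    intro r hr
    rw [Measure.addHaar_ball volume x hr.le, finrank_euclideanSpace_fin]
  have heq : ∀ r : ℝ, 0 < r →
      volume (S ∩ ball x r) / volume (ball x r)
        = (volume (S ∩ ball x r) / ENNReal.ofReal (r ^ n)) / V1 := by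
    intro r hr
    rw [hball r hr, aux_div_mul _ _ _ (by positivity) ENNReal.ofReal_ne_top]
  constructor
  · intro h
    have h2 : Tendsto (fun r : ℝ =>
        (volume (S ∩ ball x r) / volume (ball x r)) * V1) (𝓝[>] (0 : ℝ)) (𝓝 0) := by
      have := ENNReal.Tendsto.mul_const h (Or.inr hV1top)
      simpa using this
    refine h2.congr' ?_
    filter_upwards [self_mem_nhdsWithin] with r hr
    rw [heq r hr, ENNReal.div_mul_cancel hV1pos hV1top]
  · intro h
    have h2 : Tendsto (fun r : ℝ =>
        (volume (S ∩ ball x r) / ENNReal.ofReal (r ^ n)) / V1) (𝓝[>] (0 : ℝ)) (𝓝 0) := by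
      have := ENNReal.Tendsto.mul_const h (Or.inr (ENNReal.inv_ne_top.mpr hV1pos))
      simpa [div_eq_mul_inv] using this
    refine h2.congr' ?_
    filter_upwards [self_mem_nhdsWithin] with r hr
    rw [heq r hr]

lemma aux_add_div (a b c : ℝ≥0∞) : (a + b) / c = a / c + b / c := by
  simp only [div_eq_mul_inv, add_mul]

lemma aux_not_blowsUpTo_of_density_zero {n : ℕ} (hn : 1 ≤ n) {S : Set (Euc n)} {x : Euc n}
    (h : Tendsto (fun r : ℝ => volume (S ∩ ball x r) / ENNReal.ofReal (r ^ n))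
      (𝓝[>] (0 : ℝ)) (𝓝 0)) (ν : Euc n) : ¬ blowsUpTo S x ν := by
  rintro ⟨hν, htend⟩
  set H := {y : Euc n | ⟪y - x, ν⟫ ≤ 0} with hH
  have hνne : ν ≠ 0 := by intro h; rw [h, norm_zero] at hν; norm_num at hν
  have hw : ν + ν ≠ 0 := by
    intro hc
    apply hνne
    have h2 : (2:ℝ) • ν = 0 := by rw [two_smul]; exact hc
    have h3 := congrArg (fun z : Euc n => (2:ℝ)⁻¹ • z) h2
    simpa [smul_smul] using h3
  obtain ⟨δ, hδ, hδ4, hcone⟩ := aux_cone x hν hν hw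
  have hlow := aux_lower_bound (A := fun r => H ∩ ball x r) hn hδ (fun r hr => by
    obtain ⟨z, hz⟩ := hcone r hr
    refine ⟨z, fun y hy => ?_⟩
    have h5 := hz hy
    exact ⟨h5.1.1, h5.2⟩)
  -- A r := H ∩ ball x r
  have hincl : ∀ r : ℝ, H ∩ ball x r ⊆ (symmDiff S H ∩ ball x r) ∪ (S ∩ ball x r) := by
    rintro r y ⟨hyH, hyb⟩
    by_cases hyS : y ∈ S
    · exact Or.inr ⟨hyS, hyb⟩
    · exact Or.inl ⟨Set.mem_symmDiff.mpr (Or.inr ⟨hyH, hyS⟩), hyb⟩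
  have hub : Tendsto (fun r : ℝ => volume (H ∩ ball x r) / ENNReal.ofReal (r ^ n))
      (𝓝[>] (0 : ℝ)) (𝓝 0) := by
    apply aux_tendsto_zero_of_le (g := fun r : ℝ =>
      volume (symmDiff S H ∩ ball x r) / ENNReal.ofReal (r ^ n)
        + volume (S ∩ ball x r) / ENNReal.ofReal (r ^ n))
    · have := htend.add h
      simpa using this
    · filter_upwards with r
      calc volume (H ∩ ball x r) / ENNReal.ofReal (r ^ n)
          ≤ (volume (symmDiff S H ∩ ball x r) + volume (S ∩ ball x r)) / ENNReal.ofReal (r ^ n) :=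
            ENNReal.div_le_div_right ((measure_mono (hincl r)).trans (measure_union_le _ _)) _
        _ = _ := aux_add_div _ _ _
  refine aux_absurd ?_ hub hlow
  exact ENNReal.mul_pos (by positivity) (measure_ball_pos volume _ one_pos).ne'

lemma aux_density_zero_of_two {n : ℕ} (hn : 1 ≤ n) {Ki Kj S : Set (Euc n)} {x νi νj : Euc n}
    (hKi : blowsUpTo Ki x νi) (hKj : blowsUpTo Kj x νj)
    (hdisj : volume (Ki ∩ Kj) = 0) (hS : ∀ y ∈ S, y ∉ Ki ∧ y ∉ Kj) :
    Tendsto (fun r : ℝ => volume (S ∩ ball x r) / ENNReal.ofReal (r ^ n))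
      (𝓝[>] (0 : ℝ)) (𝓝 0) := by
  obtain ⟨hνi, hti⟩ := hKi
  obtain ⟨hνj, htj⟩ := hKj
  set Hi := {y : Euc n | ⟪y - x, νi⟫ ≤ 0} with hHi
  set Hj := {y : Euc n | ⟪y - x, νj⟫ ≤ 0} with hHj
  have hsum : Tendsto (fun r : ℝ =>
      volume (symmDiff Ki Hi ∩ ball x r) / ENNReal.ofReal (r ^ n)
        + volume (symmDiff Kj Hj ∩ ball x r) / ENNReal.ofReal (r ^ n))
      (𝓝[>] (0 : ℝ)) (𝓝 0) := by
    have := hti.add htj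
    simpa using this
  have hopp : νj = -νi := by
    by_contra hne
    have hw : νi + νj ≠ 0 := by
      intro hc
      exact hne (eq_neg_of_add_eq_zero_right hc)
    obtain ⟨δ, hδ, hδ4, hcone⟩ := aux_cone x hνi hνj hw
    have hlow := aux_lower_bound (A := fun r => (Hi ∩ Hj) ∩ ball x r) hn hδ (fun r hr => by
      obtain ⟨z, hz⟩ := hcone r hr
      exact ⟨z, fun y hy => hz hy⟩)
    have hincl : ∀ r : ℝ, (Hi ∩ Hj) ∩ ball x r ⊆
        (symmDiff Ki Hi ∩ ball x r) ∪ (symmDiff Kj Hj ∩ ball x r) ∪ (Ki ∩ Kj) := by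
      rintro r y ⟨⟨hyi, hyj⟩, hyb⟩
      by_cases h1 : y ∈ Ki
      · by_cases h2 : y ∈ Kj
        · exact Or.inr ⟨h1, h2⟩
        · exact Or.inl (Or.inr ⟨Set.mem_symmDiff.mpr (Or.inr ⟨hyj, h2⟩), hyb⟩)
      · exact Or.inl (Or.inl ⟨Set.mem_symmDiff.mpr (Or.inr ⟨hyi, h1⟩), hyb⟩)
    have hub : Tendsto (fun r : ℝ => volume ((Hi ∩ Hj) ∩ ball x r) / ENNReal.ofReal (r ^ n))
        (𝓝[>] (0 : ℝ)) (𝓝 0) := by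
      apply aux_tendsto_zero_of_le hsum
      filter_upwards with r
      have hv : volume ((Hi ∩ Hj) ∩ ball x r)
          ≤ volume (symmDiff Ki Hi ∩ ball x r) + volume (symmDiff Kj Hj ∩ ball x r) := by
        calc volume ((Hi ∩ Hj) ∩ ball x r)
            ≤ volume ((symmDiff Ki Hi ∩ ball x r) ∪ (symmDiff Kj Hj ∩ ball x r) ∪ (Ki ∩ Kj)) :=
              measure_mono (hincl r)
          _ ≤ volume ((symmDiff Ki Hi ∩ ball x r) ∪ (symmDiff Kj Hj ∩ ball x r))
              + volume (Ki ∩ Kj) := measure_union_le _ _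
          _ = volume ((symmDiff Ki Hi ∩ ball x r) ∪ (symmDiff Kj Hj ∩ ball x r)) := by
              rw [hdisj, add_zero]
          _ ≤ _ := measure_union_le _ _
      calc volume ((Hi ∩ Hj) ∩ ball x r) / ENNReal.ofReal (r ^ n)
          ≤ (volume (symmDiff Ki Hi ∩ ball x r) + volume (symmDiff Kj Hj ∩ ball x r))
            / ENNReal.ofReal (r ^ n) := ENNReal.div_le_div_right hv _
        _ = _ := aux_add_div _ _ _
    refine aux_absurd ?_ hub hlow
    exact ENNReal.mul_pos (by positivity) (measure_ball_pos volume _ one_pos).ne'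
  -- now νj = -νi, so S ∩ ball ⊆ ΔHi ∪ ΔHj
  apply aux_tendsto_zero_of_le hsum
  filter_upwards with r
  have hincl : S ∩ ball x r ⊆ (symmDiff Ki Hi ∩ ball x r) ∪ (symmDiff Kj Hj ∩ ball x r) := by
    rintro y ⟨hyS, hyb⟩
    obtain ⟨h1, h2⟩ := hS y hyS
    by_cases hy : ⟪y - x, νi⟫ ≤ 0
    · exact Or.inl ⟨Set.mem_symmDiff.mpr (Or.inr ⟨hy, h1⟩), hyb⟩
    · refine Or.inr ⟨Set.mem_symmDiff.mpr (Or.inr ⟨?_, h2⟩), hyb⟩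
      show ⟪y - x, νj⟫ ≤ 0
      rw [hopp, inner_neg_right]
      linarith [not_le.mp hy]
  calc volume (S ∩ ball x r) / ENNReal.ofReal (r ^ n)
      ≤ (volume (symmDiff Ki Hi ∩ ball x r) + volume (symmDiff Kj Hj ∩ ball x r))
        / ENNReal.ofReal (r ^ n) :=
        ENNReal.div_le_div_right ((measure_mono hincl).trans (measure_union_le _ _)) _
    _ = _ := aux_add_div _ _ _

lemma aux_transfer {n : ℕ} {K S : Set (Euc n)} {x ν : Euc n} {r0 : ℝ} (hr0 : 0 < r0)
    (hloc : S ∩ ball x r0 = ball x r0 \ K) (hK : blowsUpTo K x ν) : blowsUpTo S x (-ν) := by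
  obtain ⟨hν, htend⟩ := hK
  have hνne : ν ≠ 0 := by intro h; rw [h, norm_zero] at hν; norm_num at hν
  refine ⟨by rw [norm_neg]; exact hν, ?_⟩
  apply aux_tendsto_zero_of_le htend
  filter_upwards [Ioo_mem_nhdsGT_of_mem ⟨le_refl (0 : ℝ), hr0⟩] with r hr
  apply ENNReal.div_le_div_right
  have hincl : symmDiff S {y : Euc n | ⟪y - x, -ν⟫ ≤ 0} ∩ ball x r ⊆
      (symmDiff K {y : Euc n | ⟪y - x, ν⟫ ≤ 0} ∩ ball x r) ∪ {y : Euc n | ⟪y - x, ν⟫ = 0} := by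
    rintro y ⟨hyΔ, hyb⟩
    have hyb0 : y ∈ ball x r0 := ball_subset_ball hr.2.le hyb
    have hSK : y ∈ S ↔ y ∉ K := by
      constructor
      · intro hyS
        have : y ∈ S ∩ ball x r0 := ⟨hyS, hyb0⟩
        rw [hloc] at this
        exact this.2
      · intro hyK
        have : y ∈ ball x r0 \ K := ⟨hyb0, hyK⟩
        rw [← hloc] at this
        exact this.1
    rcases Set.mem_symmDiff.mp hyΔ with ⟨hyS, hyH'⟩ | ⟨hyH', hyS⟩
    · -- y ∈ S, y ∉ H' : so y ∉ K and ⟪y-x,ν⟫ < 0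
      have h1 : y ∉ K := hSK.mp hyS
      have h2 : ⟪y - x, ν⟫ < 0 := by
        have := hyH'
        simp only [Set.mem_setOf_eq, inner_neg_right, not_le, neg_pos] at this
        exact this
      exact Or.inl ⟨Set.mem_symmDiff.mpr (Or.inr ⟨h2.le, h1⟩), hyb⟩
    · -- y ∈ H', y ∉ S : y ∈ K, ⟪y-x,ν⟫ ≥ 0
      have h1 : y ∈ K := by by_contra h; exact hyS (hSK.mpr h)
      have h2 : 0 ≤ ⟪y - x, ν⟫ := by
        have := hyH'
        simp only [Set.mem_setOf_eq, inner_neg_right] at this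
        linarith
      rcases eq_or_lt_of_le h2 with heq | hlt
      · exact Or.inr heq.symm
      · exact Or.inl ⟨Set.mem_symmDiff.mpr (Or.inl ⟨h1, not_le.mpr hlt⟩), hyb⟩
  calc volume (symmDiff S {y : Euc n | ⟪y - x, -ν⟫ ≤ 0} ∩ ball x r)
      ≤ volume (symmDiff K {y : Euc n | ⟪y - x, ν⟫ ≤ 0} ∩ ball x r)
        + volume {y : Euc n | ⟪y - x, ν⟫ = 0} := (measure_mono hincl).trans (measure_union_le _ _)
    _ = volume (symmDiff K {y : Euc n | ⟪y - x, ν⟫ ≤ 0} ∩ ball x r) := by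
        rw [aux_volume_hyperplane x ν hνne, add_zero]
/-- **Proposition `prima caratterizazione` and Corollary `egli e chiuso`**: if
`1 ≤ n ≤ 7`, `N ≥ 2`, `Ω ⊂ ℝⁿ` is an open, bounded, connected set with `C¹` boundary and
finite perimeter, and `𝓔` is a Cheeger `N`-cluster of `Ω` with closed chambers, then
`Σ(𝓔; Ω) = Σ(𝓔(0); Ω) = {x ∈ ∂𝓔(0) ∩ Ω : θ_n(x, 𝓔(0)) = 0}
 = Ω ∩ ⋃_{i ≠ j} (∂𝓔(i) ∩ ∂𝓔(j) ∩ ∂𝓔(0))`, and `Σ(𝓔(0); Ω)` is closed. -/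
theorem singular_set_characterization (n N : ℕ) (hn : 1 ≤ n) (hn7 : n ≤ 7)
    (hN : 2 ≤ N) (Ω : Set (Euc n)) (hΩopen : IsOpen Ω) (hΩbd : IsBounded Ω)
    (hΩconn : IsConnected Ω) (hΩC1 : HasC1Boundary Ω) (hΩper : perimeter Ω < ⊤)
    (𝓔 : NCluster n N Ω) (h𝓔 : IsCheegerNCluster 𝓔)
    (hclosed : ∀ k, IsClosed (𝓔.cham k))
    (hrep : ∀ k, redBoundary (𝓔.cham k) = frontier (𝓔.cham k)) :
    ((frontier (extChamber 𝓔) \ redBoundary (extChamber 𝓔)) ∩ Ω) ∪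
        (⋃ i, (frontier (𝓔.cham i) \ redBoundary (𝓔.cham i)) ∩ Ω)
      = (frontier (extChamber 𝓔) \ redBoundary (extChamber 𝓔)) ∩ Ω ∧
    (frontier (extChamber 𝓔) \ redBoundary (extChamber 𝓔)) ∩ Ω
      = {x | x ∈ frontier (extChamber 𝓔) ∩ Ω ∧ HasDensity (extChamber 𝓔) x 0} ∧
    (frontier (extChamber 𝓔) \ redBoundary (extChamber 𝓔)) ∩ Ω
      = Ω ∩ ⋃ (i) (j) (_ : i ≠ j),
          frontier (𝓔.cham i) ∩ frontier (𝓔.cham j) ∩ frontier (extChamber 𝓔) ∧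
    IsClosed ((frontier (extChamber 𝓔) \ redBoundary (extChamber 𝓔)) ∩ Ω) := by
  haveI : ∀ (p : Prop), Finite p := fun p => Finite.of_subsingleton
  set ext := extChamber 𝓔 with hextdef
  have hUK_closed : IsClosed (⋃ i, 𝓔.cham i) := isClosed_iUnion_of_finite (s := 𝓔.cham) hclosed
  have hextOpen : IsOpen ext := hΩopen.sdiff hUK_closed
  have hext_disj : ∀ y, y ∈ ext → ∀ j, y ∉ 𝓔.cham j := by
    intro y hy j hyj
    exact hy.2 (Set.mem_iUnion.mpr ⟨j, hyj⟩)
  have hnotint : ∀ x, x ∈ closure ext → ∀ j, x ∉ interior (𝓔.cham j) := by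
    intro x hx j hxj
    rw [_root_.mem_closure_iff] at hx
    obtain ⟨y, hy1, hy2⟩ := hx _ isOpen_interior hxj
    exact hext_disj y hy2 j (interior_subset hy1)
  have hfr_not_mem : ∀ x, x ∈ frontier ext → x ∉ ext := by
    intro x hx
    rw [hextOpen.frontier_eq] at hx
    exact hx.2
  -- A : every singular point lies on some chamber boundary
  have haveA : ∀ x, x ∈ frontier ext → x ∈ Ω → ∃ i, x ∈ frontier (𝓔.cham i) := by
    intro x hxF hxΩ
    have hxU : x ∈ ⋃ i, 𝓔.cham i := by
      by_contra h
      exact hfr_not_mem x hxF ⟨hxΩ, h⟩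
    obtain ⟨i, hi⟩ := Set.mem_iUnion.mp hxU
    refine ⟨i, ?_⟩
    rw [(hclosed i).frontier_eq]
    exact ⟨hi, hnotint x (frontier_subset_closure hxF) i⟩
  -- B : a point on exactly one chamber boundary is in the reduced boundary of ext
  have haveB : ∀ x, x ∈ frontier ext → x ∈ Ω → ∀ i, x ∈ frontier (𝓔.cham i) →
      (∀ j, j ≠ i → x ∉ frontier (𝓔.cham j)) → x ∈ redBoundary ext := by
    intro x hxF hxΩ i hxi honly
    have hnot : ∀ j, j ≠ i → x ∉ 𝓔.cham j := by
      intro j hj hxj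
      have hint : x ∈ interior (𝓔.cham j) := by
        by_contra h
        exact honly j hj (by rw [(hclosed j).frontier_eq]; exact ⟨hxj, h⟩)
      exact hnotint x (frontier_subset_closure hxF) j hint
    have hUopen : IsOpen (Ω ∩ ⋂ (j) (_ : j ≠ i), (𝓔.cham j)ᶜ) := by
      apply hΩopen.inter
      apply isOpen_iInter_of_finite
      intro j
      apply isOpen_iInter_of_finite
      intro hj
      exact (hclosed j).isOpen_compl
    have hxmem : x ∈ Ω ∩ ⋂ (j) (_ : j ≠ i), (𝓔.cham j)ᶜ := by
      refine ⟨hxΩ, ?_⟩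
      simp only [Set.mem_iInter, Set.mem_compl_iff]
      exact hnot
    obtain ⟨ε, hε, hball⟩ := Metric.isOpen_iff.mp hUopen x hxmem
    have hloc : ext ∩ ball x ε = ball x ε \ 𝓔.cham i := by
      ext y
      constructor
      · rintro ⟨hy1, hy2⟩
        exact ⟨hy2, hext_disj y hy1 i⟩
      · rintro ⟨hy1, hy2⟩
        have hyU := hball hy1
        refine ⟨⟨hyU.1, ?_⟩, hy1⟩
        intro hyK
        obtain ⟨j, hj⟩ := Set.mem_iUnion.mp hyK
        by_cases hji : j = i
        · exact hy2 (hji ▸ hj)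
        · have := hyU.2
          simp only [Set.mem_iInter, Set.mem_compl_iff] at this
          exact this j hji hj
    have hxred : x ∈ redBoundary (𝓔.cham i) := by rw [hrep i]; exact hxi
    obtain ⟨ν, hν⟩ := hxred
    exact ⟨-ν, aux_transfer hε hloc hν⟩
  -- two chamber boundaries ⟹ density zero
  have haveT2D : ∀ x, x ∈ Ω → ∀ i j, i ≠ j → x ∈ frontier (𝓔.cham i) →
      x ∈ frontier (𝓔.cham j) → HasDensity ext x 0 := by
    intro x hxΩ i j hij hi hj
    have hνi : x ∈ redBoundary (𝓔.cham i) := by rw [hrep i]; exact hi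
    have hνj : x ∈ redBoundary (𝓔.cham j) := by rw [hrep j]; exact hj
    obtain ⟨νi, hbi⟩ := hνi
    obtain ⟨νj, hbj⟩ := hνj
    have hdisj := 𝓔.ae_disjoint i j hij
    have hS : ∀ y ∈ ext, y ∉ 𝓔.cham i ∧ y ∉ 𝓔.cham j := fun y hy =>
      ⟨hext_disj y hy i, hext_disj y hy j⟩
    exact (aux_density_iff hn ext x).mpr (aux_density_zero_of_two hn hbi hbj hdisj hS)
  -- density zero ⟹ not in reduced boundary
  have haveD2S : ∀ x, HasDensity ext x 0 → x ∉ redBoundary ext := by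
    rintro x h ⟨ν, hb⟩
    exact aux_not_blowsUpTo_of_density_zero hn ((aux_density_iff hn ext x).mp h) ν hb
  -- Conjunct 3 (proved first, used for 4)
  have hconj3 : (frontier ext \ redBoundary ext) ∩ Ω
      = Ω ∩ ⋃ (i) (j) (_ : i ≠ j),
          frontier (𝓔.cham i) ∩ frontier (𝓔.cham j) ∩ frontier ext := by
    apply Set.Subset.antisymm
    · rintro x ⟨⟨hxF, hxR⟩, hxΩ⟩
      obtain ⟨i, hi⟩ := haveA x hxF hxΩ
      by_cases hex : ∃ j, j ≠ i ∧ x ∈ frontier (𝓔.cham j)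
      · obtain ⟨j, hji, hj⟩ := hex
        refine ⟨hxΩ, ?_⟩
        exact Set.mem_iUnion.mpr ⟨i, Set.mem_iUnion.mpr ⟨j, Set.mem_iUnion.mpr
          ⟨Ne.symm hji, ⟨⟨hi, hj⟩, hxF⟩⟩⟩⟩
      · exact absurd (haveB x hxF hxΩ i hi (fun j hj hfr => hex ⟨j, hj, hfr⟩)) hxR
    · rintro x ⟨hxΩ, hU⟩
      simp only [Set.mem_iUnion] at hU
      obtain ⟨i, j, hij, ⟨⟨hi, hj⟩, hxF⟩⟩ := hU
      exact ⟨⟨hxF, haveD2S x (haveT2D x hxΩ i j hij hi hj)⟩, hxΩ⟩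
  refine ⟨?_, ?_, hconj3, ?_⟩
  · -- Conjunct 1
    have hemp : (⋃ i, (frontier (𝓔.cham i) \ redBoundary (𝓔.cham i)) ∩ Ω) = ∅ := by
      apply Set.iUnion_eq_empty.mpr
      intro i
      rw [hrep i]
      simp
    rw [hemp, Set.union_empty]
  · -- Conjunct 2
    apply Set.Subset.antisymm
    · intro x hx
      have hx3 := hconj3 ▸ hx
      obtain ⟨hxΩ, hU⟩ := hx3
      simp only [Set.mem_iUnion] at hU
      obtain ⟨i, j, hij, ⟨⟨hi, hj⟩, hxF⟩⟩ := hU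
      exact ⟨⟨hxF, hxΩ⟩, haveT2D x hxΩ i j hij hi hj⟩
    · rintro x ⟨⟨hxF, hxΩ⟩, hdens⟩
      exact ⟨⟨hxF, haveD2S x hdens⟩, hxΩ⟩
  · -- Conjunct 4
    rw [hconj3]
    have hsub : (⋃ (i) (j) (_ : i ≠ j),
        frontier (𝓔.cham i) ∩ frontier (𝓔.cham j) ∩ frontier ext) ⊆ Ω := by
      intro x hx
      simp only [Set.mem_iUnion] at hx
      obtain ⟨i, j, hij, ⟨⟨hi, hj⟩, hxF⟩⟩ := hx
      have : x ∈ 𝓔.cham i := by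
        rw [(hclosed i).frontier_eq] at hi
        exact hi.1
      exact 𝓔.cham_subset i this
    rw [Set.inter_eq_right.mpr hsub]
    apply isClosed_iUnion_of_finite
    intro i
    apply isClosed_iUnion_of_finite
    intro j
    apply isClosed_iUnion_of_finite
    intro hij
    exact (isClosed_frontier.inter isClosed_frontier).inter isClosed_frontier

end
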